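/- arXiv:math/0601545 — 4 statements merged into one kernel-verified Lean document; each statement's English description precedes it below -/
import Mathlib

section
/- For every a ∈ Z_p and every n ≥ 0, the element (1+X)^{p^n a} − 1 of O_L[[X]] lies in the (n+1)-st power of the ideal (p, X). -/
open PowerSeries

private lemma dvd_descPochhammer_smeval' {R : Type*} [CommRing R] (z : R) :
    ∀ k : ℕ, 1 ≤ k → z ∣ (descPochhammer ℤ k).smeval z := by
  intro k hk
  induction k with
  | zero => omega
  | succ j ih =>
    rw [descPochhammer_succ_right, Polynomial.smeval_mul]
    rcases Nat.eq_zero_or_pos j with rfl | hj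
    · simp [Polynomial.smeval_sub, Polynomial.smeval_X, Polynomial.smeval_one]
    · exact (ih hj).mul_right _

private lemma padicValNat_factorial_le' (p : ℕ) [hp : Fact p.Prime] (k : ℕ) (hk : 1 ≤ k) :
    padicValNat p k.factorial ≤ k - 1 := by
  have h := sub_one_mul_padicValNat_factorial (p := p) k
  have hne : p.digits k ≠ [] := Nat.digits_ne_nil_iff_ne_zero.mpr (by omega)
  have hd : 1 ≤ (p.digits k).sum := by
    have hlast : (p.digits k).getLast hne ≠ 0 := Nat.getLast_digit_ne_zero p (by omega)
    have hle := List.single_le_sum (fun x (_ : x ∈ p.digits k) => Nat.zero_le x) _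
      (List.getLast_mem hne)
    omega
  have hp2 : 2 ≤ p := hp.out.two_le
  have hv : padicValNat p k.factorial ≤ (p - 1) * padicValNat p k.factorial :=
    Nat.le_mul_of_pos_left _ (by omega)
  have hsk : (p.digits k).sum ≤ k := Nat.digit_sum_le p k
  omega

private lemma pow_dvd_ring_choose' (p : ℕ) [hp : Fact p.Prime] (a : ℤ_[p]) (n k : ℕ)
    (hk : 1 ≤ k) (hkn : k ≤ n) :
    (p : ℤ_[p]) ^ (n + 1 - k) ∣ Ring.choose ((p : ℤ_[p]) ^ n * a) k := by
  have hv : padicValNat p k.factorial ≤ k - 1 := padicValNat_factorial_le' p k hk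
  set z : ℤ_[p] := (p : ℤ_[p]) ^ n * a with hz
  set v : ℕ := padicValNat p k.factorial with hvdef
  have h1 : (k.factorial : ℤ_[p]) * Ring.choose z k = (descPochhammer ℤ k).smeval z := by
    rw [Ring.descPochhammer_eq_factorial_smul_choose, nsmul_eq_mul]
  have h2 : (p : ℤ_[p]) ^ n ∣ (k.factorial : ℤ_[p]) * Ring.choose z k := by
    rw [h1]
    exact (dvd_mul_right ((p:ℤ_[p])^n) a).trans (dvd_descPochhammer_smeval' z k hk)
  obtain ⟨u, hu⟩ : p ^ v ∣ k.factorial := pow_padicValNat_dvd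
  have hp1 : ¬ p ^ (v + 1) ∣ k.factorial :=
    pow_succ_padicValNat_not_dvd (Nat.factorial_ne_zero k)
  have hpu : ¬ p ∣ u := by
    intro hdvd
    obtain ⟨m, hm⟩ := hdvd
    exact hp1 ⟨m, by rw [hu, hm]; ring⟩
  have huunit : IsUnit (u : ℤ_[p]) := by
    rw [PadicInt.isUnit_iff]
    refine le_antisymm (PadicInt.norm_le_one _) ?_
    by_contra hlt
    push_neg at hlt
    have : ‖((u : ℤ) : ℤ_[p])‖ < 1 := by push_cast; exact hlt
    rw [PadicInt.norm_int_lt_one_iff_dvd] at this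
    exact hpu (Int.ofNat_dvd.mp this)
  have hvn : v ≤ n := le_trans hv (by omega)
  obtain ⟨c, hc⟩ := h2
  have hcast : (k.factorial : ℤ_[p]) = (p : ℤ_[p]) ^ v * u := by
    rw [hu]; push_cast; ring
  have hne : ((p : ℤ_[p]) ^ v) ≠ 0 := pow_ne_zero _ (by
    exact_mod_cast (Nat.cast_ne_zero (R := ℤ_[p])).mpr hp.out.ne_zero)
  have hcancel : (u : ℤ_[p]) * Ring.choose z k = (p : ℤ_[p]) ^ (n - v) * c := by
    apply mul_left_cancel₀ hne
    rw [← mul_assoc, ← hcast, hc, ← mul_assoc, ← pow_add]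
    congr 2
    omega
  have hdvd : (p : ℤ_[p]) ^ (n - v) ∣ Ring.choose z k := by
    have : (p : ℤ_[p]) ^ (n - v) ∣ (u : ℤ_[p]) * Ring.choose z k := ⟨c, hcancel⟩
    exact huunit.dvd_mul_left.mp this
  exact dvd_trans (pow_dvd_pow _ (by omega)) hdvd

private lemma mem_span_pow_of_coeff' {O : Type*} [CommRing O] (c : O) (f : O⟦X⟧) (m : ℕ)
    (h : ∀ k, k < m → (PowerSeries.coeff k) f ∈ (Ideal.span {c}) ^ (m - k)) :
    f ∈ (Ideal.span ({PowerSeries.C c, PowerSeries.X} : Set O⟦X⟧)) ^ m := by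
  set I : Ideal O⟦X⟧ := Ideal.span {PowerSeries.C c, PowerSeries.X} with hI
  have hXI : (PowerSeries.X : O⟦X⟧) ∈ I := Ideal.subset_span (by simp)
  have hCI : (PowerSeries.C c : O⟦X⟧) ∈ I := Ideal.subset_span (by simp)
  set g : O⟦X⟧ := f - ∑ k ∈ Finset.range m, PowerSeries.C ((PowerSeries.coeff k) f) * X ^ k
    with hg
  have hgd : (X : O⟦X⟧) ^ m ∣ g := by
    rw [PowerSeries.X_pow_dvd_iff]
    intro j hj
    rw [hg, map_sub, map_sum]
    rw [Finset.sum_eq_single j]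
    · simp [PowerSeries.coeff_X_pow]
    · intro b _ hbj
      simp [PowerSeries.coeff_X_pow, PowerSeries.coeff_C_mul, hbj, Ne.symm hbj]
    · intro hjm; exact (hjm (Finset.mem_range.mpr hj)).elim
  have hgmem : g ∈ I ^ m := by
    obtain ⟨t, ht⟩ := hgd
    rw [ht]
    exact Ideal.mul_mem_right _ _ (Ideal.pow_mem_pow hXI m)
  have hsum : (∑ k ∈ Finset.range m, PowerSeries.C ((PowerSeries.coeff k) f) * X ^ k)
      ∈ I ^ m := by
    apply Ideal.sum_mem
    intro k hk
    rw [Finset.mem_range] at hk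
    have hC : PowerSeries.C ((PowerSeries.coeff k) f) ∈ I ^ (m - k) := by
      have hmap : PowerSeries.C ((PowerSeries.coeff k) f) ∈
          Ideal.map (PowerSeries.C (R := O)) ((Ideal.span {c}) ^ (m - k)) :=
        Ideal.mem_map_of_mem _ (h k hk)
      rw [Ideal.map_pow, Ideal.map_span] at hmap
      refine Ideal.pow_right_mono ?_ _ hmap
      rw [Set.image_singleton]
      exact Ideal.span_mono (by simp)
    have hX : (X : O⟦X⟧) ^ k ∈ I ^ k := Ideal.pow_mem_pow hXI k
    have := Ideal.mul_mem_mul hC hX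
    rwa [← pow_add, Nat.sub_add_cancel hk.le] at this
  have : f = g + ∑ k ∈ Finset.range m, PowerSeries.C ((PowerSeries.coeff k) f) * X ^ k := by
    rw [hg]; ring
  rw [this]
  exact Ideal.add_mem _ hgmem hsum

/-- `(1+X)^z ∈ O[[X]]` for `z ∈ ℤ_p`, defined by the binomial series
`Σ_n C(z,n) X^n`, where `C(z,n) = Ring.choose z n ∈ ℤ_p`. -/
noncomputable def onePlusXPow (p : ℕ) [Fact p.Prime] (O : Type*) [CommRing O]
    [Algebra ℤ_[p] O] (z : ℤ_[p]) : PowerSeries O :=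
  PowerSeries.mk fun n => algebraMap ℤ_[p] O (Ring.choose z n)

/-- For every `a ∈ ℤ_p` and every `n ≥ 0`, the element `(1+X)^{p^n a} − 1` of
`O_L[[X]]` lies in the `(n+1)`-st power of the ideal `(p, X)`. -/
theorem onePlusXPow_pow_sub_one_mem
    (p : ℕ) [Fact p.Prime] (O : Type*) [CommRing O] [Algebra ℤ_[p] O]
    (a : ℤ_[p]) (n : ℕ) :
    onePlusXPow p O ((p : ℤ_[p]) ^ n * a) - 1 ∈
      (Ideal.span ({(p : PowerSeries O), PowerSeries.X} : Set (PowerSeries O))) ^ (n + 1) := by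
  have hCp : (PowerSeries.C (p : O)) = ((p : ℕ) : O⟦X⟧) := by
    rw [map_natCast]
  rw [← hCp]
  apply mem_span_pow_of_coeff'
  intro k hk
  rcases Nat.eq_zero_or_pos k with rfl | hk1
  · have : (PowerSeries.coeff 0) (onePlusXPow p O ((p : ℤ_[p]) ^ n * a) - 1) = 0 := by
      simp [onePlusXPow, PowerSeries.coeff_mk, Ring.choose_zero_right]
    rw [this]
    exact Ideal.zero_mem _
  · have hcoeff : (PowerSeries.coeff k) (onePlusXPow p O ((p : ℤ_[p]) ^ n * a) - 1)
        = algebraMap ℤ_[p] O (Ring.choose ((p : ℤ_[p]) ^ n * a) k) := by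
      have hk0 : k ≠ 0 := by omega
      simp [onePlusXPow, PowerSeries.coeff_mk, PowerSeries.coeff_one, hk0]
    rw [hcoeff, Ideal.span_singleton_pow, Ideal.mem_span_singleton]
    obtain ⟨c, hc⟩ := pow_dvd_ring_choose' p a n k hk1 (by omega)
    refine ⟨algebraMap ℤ_[p] O c, ?_⟩
    rw [hc, map_mul, map_pow, map_natCast]
end

section
/- Let f(X) = Σ_{n≥0} a_n X^n ∈ L[[X]] converge on the open unit disc, and let r ≥ 0. Then f is of order r (i.e., for one, equivalently every, ρ ∈ (0,1), the sequence p^{-nr}·sup_{|z| ≤ ρ^{1/p^n}} |f(z)| is bounded) if and only if the sequence (n+1)^{-r}·|a_n| is bounded. -/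
open Filter

/-- The sup norm `‖f‖_{D(0,ρ)} = sup_i |a_i| ρ^i` of a power series (given by its
coefficient sequence) on the closed disc of radius `ρ`. -/
noncomputable def discNorm {L : Type*} [NormedField L] (f : ℕ → L) (ρ : ℝ) : ℝ :=
  ⨆ i : ℕ, ‖f i‖ * ρ ^ i

private lemma geom_aux {τ : ℝ} (h0 : 0 ≤ τ) (h1 : τ < 1) (i : ℕ) :
    ((i : ℝ) + 1) * τ ^ i ≤ (1 - τ)⁻¹ := by
  have h2 : ((i : ℝ) + 1) * τ ^ i ≤ ∑ j ∈ Finset.range (i + 1), τ ^ j := by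
    have hterm : ∀ j ∈ Finset.range (i + 1), τ ^ i ≤ τ ^ j := fun j hj =>
      pow_le_pow_of_le_one h0 h1.le (Nat.lt_succ_iff.mp (Finset.mem_range.mp hj))
    calc ((i : ℝ) + 1) * τ ^ i = ∑ _j ∈ Finset.range (i + 1), τ ^ i := by
          rw [Finset.sum_const, Finset.card_range, nsmul_eq_mul]
          push_cast; ring
      _ ≤ _ := Finset.sum_le_sum hterm
  have h3 : ∑ j ∈ Finset.range (i + 1), τ ^ j ≤ ∑' j : ℕ, τ ^ j :=
    Summable.sum_le_tsum _ (fun j _ => pow_nonneg h0 j) (summable_geometric_of_lt_one h0 h1)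
  rw [tsum_geometric_of_lt_one h0 h1] at h3
  linarith

private lemma rpow_le_linear {ρ ε : ℝ} (h0 : 0 < ρ) (he0 : 0 ≤ ε) (he1 : ε ≤ 1) :
    ρ ^ ε ≤ 1 - ε * (1 - ρ) := by
  have hcx := convexOn_exp.2 (Set.mem_univ (0 : ℝ)) (Set.mem_univ (Real.log ρ))
      (by linarith : (0 : ℝ) ≤ 1 - ε) he0 (by ring)
  simp only [smul_eq_mul, mul_zero, zero_add, Real.exp_zero, Real.exp_log h0] at hcx
  rw [Real.rpow_def_of_pos h0]
  calc Real.exp (Real.log ρ * ε) = Real.exp (ε * Real.log ρ) := by rw [mul_comm]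
    _ ≤ (1 - ε) * 1 + ε * ρ := by simpa using hcx
    _ = 1 - ε * (1 - ρ) := by ring

/-- Let `f(X) = Σ a_n X^n ∈ L[[X]]` converge on the open unit disc and `r ≥ 0`.
Then `f` is of order `r` (i.e. for one, equivalently every, `ρ ∈ (0,1)`, the sequence
`p^{-nr} ‖f‖_{D(0,ρ^{1/p^n})}` is bounded) if and only if the sequence
`(n+1)^{-r} |a_n|` is bounded. -/
theorem order_iff_coeff_growth
    (p : ℕ) [Fact p.Prime]
    (L : Type*) [NormedField L] [NormedAlgebra ℚ_[p] L] [FiniteDimensional ℚ_[p] L]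
    (f : ℕ → L) (r : ℝ) (hr : 0 ≤ r)
    (hconv : ∀ ρ : ℝ, 0 < ρ → ρ < 1 →
      Tendsto (fun n : ℕ => ‖f n‖ * ρ ^ n) atTop (nhds 0)) :
    ∀ ρ : ℝ, 0 < ρ → ρ < 1 →
      (BddAbove (Set.range fun n : ℕ =>
          (p : ℝ) ^ (-(n : ℝ) * r) * discNorm f (ρ ^ (((p : ℝ) ^ n)⁻¹))) ↔
        BddAbove (Set.range fun n : ℕ => ((n : ℝ) + 1) ^ (-r) * ‖f n‖)) := by
  intro ρ hρ hρ1
  have hp1 : 1 < p := (Fact.out : p.Prime).one_lt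
  have hpR : (1 : ℝ) < (p : ℝ) := by exact_mod_cast hp1
  have hpR0 : (0 : ℝ) < (p : ℝ) := by linarith
  set σ : ℕ → ℝ := fun n => ρ ^ (((p : ℝ) ^ n)⁻¹) with hσ
  have hpn : ∀ n : ℕ, (0 : ℝ) < (p : ℝ) ^ n := fun n => pow_pos hpR0 n
  have hpn1 : ∀ n : ℕ, (1 : ℝ) ≤ (p : ℝ) ^ n := fun n => one_le_pow₀ hpR.le
  have hσpos : ∀ n, 0 < σ n := fun n => Real.rpow_pos_of_pos hρ _
  have hσlt1 : ∀ n, σ n < 1 := fun n =>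
    Real.rpow_lt_one hρ.le hρ1 (by positivity)
  have hbdd : ∀ n, BddAbove (Set.range fun i : ℕ => ‖f i‖ * (σ n) ^ i) := fun n =>
    (hconv (σ n) (hσpos n) (hσlt1 n)).bddAbove_range
  have hle : ∀ n i, ‖f i‖ * (σ n) ^ i ≤ discNorm f (σ n) := fun n i => le_ciSup (hbdd n) i
  have hxpos : ∀ n : ℕ, (0 : ℝ) < (p : ℝ) ^ ((n : ℝ) * r) :=
    fun n => Real.rpow_pos_of_pos hpR0 _
  constructor
  · rintro ⟨C, hC⟩
    have hC' : ∀ n : ℕ, (p : ℝ) ^ (-(n : ℝ) * r) * discNorm f (σ n) ≤ C := fun n =>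
      hC (Set.mem_range_self n)
    have hdN : ∀ n, discNorm f (σ n) ≤ C * (p : ℝ) ^ ((n : ℝ) * r) := by
      intro n
      have h := hC' n
      rw [neg_mul, Real.rpow_neg hpR0.le, inv_mul_le_iff₀ (hxpos n)] at h
      calc discNorm f (σ n) ≤ (p : ℝ) ^ ((n : ℝ) * r) * C := h
        _ = C * (p : ℝ) ^ ((n : ℝ) * r) := mul_comm _ _
    have hd0 : 0 ≤ discNorm f (σ 0) := le_trans (by positivity) (hle 0 0)
    have hCnn : 0 ≤ C := by
      have h := hC' 0
      simp only [Nat.cast_zero, neg_zero, zero_mul, Real.rpow_zero, one_mul] at h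
      linarith
    have hρp : (0 : ℝ) < ρ ^ (p : ℝ) := Real.rpow_pos_of_pos hρ _
    refine ⟨C * (ρ ^ (p : ℝ))⁻¹, ?_⟩
    rintro x ⟨i, rfl⟩
    set n := Nat.log p (i + 1) with hn
    have h1 : ((p : ℝ)) ^ n ≤ (i : ℝ) + 1 := by
      have h := Nat.pow_log_le_self p (Nat.succ_ne_zero i)
      have : ((p ^ n : ℕ) : ℝ) ≤ ((i + 1 : ℕ) : ℝ) := by exact_mod_cast h
      push_cast at this; linarith
    have h2 : (i : ℝ) + 1 ≤ (p : ℝ) ^ (n + 1) := by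
      have h := (Nat.lt_pow_succ_log_self hp1 (i + 1)).le
      have : ((i + 1 : ℕ) : ℝ) ≤ ((p ^ (n + 1) : ℕ) : ℝ) := by exact_mod_cast h
      push_cast at this; linarith
    have hσi : (σ n) ^ i = ρ ^ (((p : ℝ) ^ n)⁻¹ * (i : ℝ)) := by
      rw [← Real.rpow_natCast (σ n) i, hσ]
      rw [← Real.rpow_mul hρ.le]
    have hexp : ((p : ℝ) ^ n)⁻¹ * (i : ℝ) ≤ (p : ℝ) := by
      rw [inv_mul_le_iff₀ (hpn n)]
      have hps : ((p : ℝ)) ^ (n + 1) = (p : ℝ) ^ n * p := pow_succ _ _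
      nlinarith [hpn n]
    have hmono : ρ ^ (p : ℝ) ≤ (σ n) ^ i := by
      rw [hσi]
      exact Real.rpow_le_rpow_of_exponent_ge hρ hρ1.le hexp
    have hpnr : (p : ℝ) ^ ((n : ℝ) * r) ≤ ((i : ℝ) + 1) ^ r := by
      have heq : (p : ℝ) ^ ((n : ℝ) * r) = ((p : ℝ) ^ n) ^ r := by
        rw [← Real.rpow_natCast (p : ℝ) n, ← Real.rpow_mul hpR0.le]
      rw [heq]
      exact Real.rpow_le_rpow (by positivity) h1 hr
    have key : ‖f i‖ * ρ ^ (p : ℝ) ≤ C * ((i : ℝ) + 1) ^ r :=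
      calc ‖f i‖ * ρ ^ (p : ℝ) ≤ ‖f i‖ * (σ n) ^ i :=
            mul_le_mul_of_nonneg_left hmono (norm_nonneg _)
        _ ≤ discNorm f (σ n) := hle n i
        _ ≤ C * (p : ℝ) ^ ((n : ℝ) * r) := hdN n
        _ ≤ C * ((i : ℝ) + 1) ^ r := mul_le_mul_of_nonneg_left hpnr hCnn
    have hi1 : (0 : ℝ) < ((i : ℝ) + 1) ^ r := Real.rpow_pos_of_pos (by positivity) _
    show ((i : ℝ) + 1) ^ (-r) * ‖f i‖ ≤ C * (ρ ^ (p : ℝ))⁻¹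
    rw [Real.rpow_neg (by positivity : (0 : ℝ) ≤ (i : ℝ) + 1), inv_mul_eq_div,
      div_le_iff₀ hi1]
    have hrw : C * (ρ ^ (p : ℝ))⁻¹ * ((i : ℝ) + 1) ^ r
        = C * ((i : ℝ) + 1) ^ r / ρ ^ (p : ℝ) := by ring
    rw [hrw, le_div_iff₀ hρp]
    exact key
  · rintro ⟨C, hC⟩
    have hC' : ∀ i : ℕ, ((i : ℝ) + 1) ^ (-r) * ‖f i‖ ≤ C := fun i =>
      hC (Set.mem_range_self i)
    have hfi : ∀ i : ℕ, ‖f i‖ ≤ C * ((i : ℝ) + 1) ^ r := by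
      intro i
      have h := hC' i
      have hi1 : (0 : ℝ) < ((i : ℝ) + 1) ^ r := Real.rpow_pos_of_pos (by positivity) _
      rw [Real.rpow_neg (by positivity : (0 : ℝ) ≤ (i : ℝ) + 1), inv_mul_eq_div,
        div_le_iff₀ hi1] at h
      linarith
    have hCnn : 0 ≤ C := le_trans (by positivity) (hC' 0)
    rcases eq_or_lt_of_le hr with hr0 | hrpos
    · refine ⟨C, ?_⟩
      rintro x ⟨n, rfl⟩
      have hdn : discNorm f (σ n) ≤ C := by
        unfold discNorm
        refine ciSup_le fun i => ?_
        have h := hfi i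
        rw [← hr0, Real.rpow_zero, mul_one] at h
        calc ‖f i‖ * (σ n) ^ i ≤ ‖f i‖ * 1 :=
              mul_le_mul_of_nonneg_left (pow_le_one₀ (hσpos n).le (hσlt1 n).le)
                (norm_nonneg _)
          _ = ‖f i‖ := mul_one _
          _ ≤ C := h
      show (p : ℝ) ^ (-(n : ℝ) * r) * discNorm f (σ n) ≤ C
      rw [← hr0, mul_zero, Real.rpow_zero, one_mul]
      exact hdn
    · set M : ℝ := max r 1 / (1 - ρ) with hM
      have h1ρ : (0 : ℝ) < 1 - ρ := by linarith
      have hMnn : 0 ≤ M := by positivity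
      refine ⟨C * M ^ r, ?_⟩
      rintro x ⟨n, rfl⟩
      set ε : ℝ := ((p : ℝ) ^ n * r)⁻¹ with hε
      have hεpos : 0 < ε := by positivity
      set τ : ℝ := ρ ^ ε with hτ
      have hτpos : 0 < τ := Real.rpow_pos_of_pos hρ _
      have hτlt1 : τ < 1 := Real.rpow_lt_one hρ.le hρ1 hεpos
      have hτr : τ ^ r = σ n := by
        rw [hτ, ← Real.rpow_mul hρ.le, hσ]
        congr 1
        rw [hε]
        field_simp
      have hτi : ∀ i : ℕ, ((τ ^ i : ℝ)) ^ r = (σ n) ^ i := by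
        intro i
        rw [← Real.rpow_natCast τ i, ← Real.rpow_mul hτpos.le, mul_comm,
          Real.rpow_mul hτpos.le, hτr, Real.rpow_natCast]
      have hCineq : (1 - τ)⁻¹ ≤ M * (p : ℝ) ^ n := by
        rcases le_or_gt ε 1 with hε1 | hε1
        · have hlin := rpow_le_linear hρ hεpos.le hε1
          have h1τ : ε * (1 - ρ) ≤ 1 - τ := by rw [hτ]; linarith
          have hεs : 0 < ε * (1 - ρ) := by positivity
          have hinv : (1 - τ)⁻¹ ≤ (ε * (1 - ρ))⁻¹ := inv_anti₀ hεs h1τ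
          have hrweq : (ε * (1 - ρ))⁻¹ = (p : ℝ) ^ n * r * (1 - ρ)⁻¹ := by
            rw [hε, mul_inv, inv_inv]
          rw [hrweq] at hinv
          refine le_trans hinv ?_
          rw [hM, div_eq_mul_inv]
          nlinarith [mul_nonneg (mul_nonneg (sub_nonneg.2 (le_max_left r 1))
            (inv_nonneg.2 h1ρ.le)) (hpn n).le]
        · have hτρ : τ ≤ ρ := by
            have := Real.rpow_le_rpow_of_exponent_ge hρ hρ1.le hε1.le
            rwa [Real.rpow_one] at this
          have hinv : (1 - τ)⁻¹ ≤ (1 - ρ)⁻¹ := inv_anti₀ (by linarith) (by linarith)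
          refine le_trans hinv ?_
          rw [hM, div_eq_mul_inv]
          nlinarith [mul_nonneg (mul_nonneg (sub_nonneg.2 (le_max_right r 1))
            (inv_nonneg.2 h1ρ.le)) (hpn n).le, hpn1 n, le_max_right r 1,
            inv_nonneg.2 h1ρ.le, inv_pos.2 h1ρ]
      have hMp : (M * (p : ℝ) ^ n) ^ r = M ^ r * (p : ℝ) ^ ((n : ℝ) * r) := by
        rw [Real.mul_rpow hMnn (hpn n).le, ← Real.rpow_natCast (p : ℝ) n,
          ← Real.rpow_mul hpR0.le]
      have hfinal : discNorm f (σ n) ≤ C * M ^ r * (p : ℝ) ^ ((n : ℝ) * r) := by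
        unfold discNorm
        refine ciSup_le fun i => ?_
        have hterm : ‖f i‖ * (σ n) ^ i ≤ C * ((i : ℝ) + 1) ^ r * (σ n) ^ i :=
          mul_le_mul_of_nonneg_right (hfi i) (pow_nonneg (hσpos n).le i)
        have hgeo : ((i : ℝ) + 1) ^ r * (σ n) ^ i = (((i : ℝ) + 1) * τ ^ i) ^ r := by
          rw [Real.mul_rpow (by positivity) (pow_nonneg hτpos.le i), hτi]
        have hbd : (((i : ℝ) + 1) * τ ^ i) ^ r ≤ (M * (p : ℝ) ^ n) ^ r :=
          Real.rpow_le_rpow (by positivity)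
            (le_trans (geom_aux hτpos.le hτlt1 i) hCineq) hr
        calc ‖f i‖ * (σ n) ^ i ≤ C * (((i : ℝ) + 1) ^ r * (σ n) ^ i) := by
              rw [← mul_assoc]; exact hterm
          _ = C * (((i : ℝ) + 1) * τ ^ i) ^ r := by rw [hgeo]
          _ ≤ C * (M * (p : ℝ) ^ n) ^ r := mul_le_mul_of_nonneg_left hbd hCnn
          _ = C * M ^ r * (p : ℝ) ^ ((n : ℝ) * r) := by rw [hMp, mul_assoc]
      calc (p : ℝ) ^ (-(n : ℝ) * r) * discNorm f (σ n)
          ≤ (p : ℝ) ^ (-(n : ℝ) * r) * (C * M ^ r * (p : ℝ) ^ ((n : ℝ) * r)) := by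
            refine mul_le_mul_of_nonneg_left ?_ (Real.rpow_pos_of_pos hpR0 _).le
            · exact hfinal
        _ = C * M ^ r := by
            rw [neg_mul, Real.rpow_neg hpR0.le]
            field_simp
end

section
/- Locally polynomial functions on Z_p of local degree at most d are dense in C^r(Z_p, L) whenever r − 1 < d (theorem of Amice–Vélu and Vishik). -/
open Filter

/-- The Mahler coefficients `a_n(f) = Σ_{i=0}^n (−1)^i C(n,i) f(n−i)`. -/
noncomputable def mahlerCoeff {p : ℕ} [Fact p.Prime] {L : Type*} [NormedField L]
    (f : ℤ_[p] → L) (n : ℕ) : L :=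
  ∑ i ∈ Finset.range (n + 1), (-1) ^ i * (n.choose i : L) * f ((n - i : ℕ) : ℤ_[p])

/-- `f` is of class `C^r`: it is continuous and `n^r |a_n(f)| → 0`. -/
def IsCr {p : ℕ} [Fact p.Prime] {L : Type*} [NormedField L]
    (r : ℝ) (f : ℤ_[p] → L) : Prop :=
  Continuous f ∧
    Tendsto (fun n : ℕ => (n : ℝ) ^ r * ‖mahlerCoeff f n‖) atTop (nhds 0)

/-- The norm `‖f‖_r = sup_n (n+1)^r |a_n(f)|` on `C^r(ℤ_p, L)`. -/
noncomputable def crNorm {p : ℕ} [Fact p.Prime] {L : Type*} [NormedField L]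
    (r : ℝ) (f : ℤ_[p] → L) : ℝ :=
  ⨆ n : ℕ, ((n : ℝ) + 1) ^ r * ‖mahlerCoeff f n‖

/-- The embedding `ℤ_p → L`. -/
noncomputable def embL (p : ℕ) [Fact p.Prime] (L : Type*) [NormedField L]
    [NormedAlgebra ℚ_[p] L] (z : ℤ_[p]) : L :=
  algebraMap ℚ_[p] L (z : ℚ_[p])

/-- `f` is locally polynomial of local degree at most `d`: for some `N`, on each coset
of `p^N ℤ_p` the function `f` is given by a polynomial of degree `≤ d`. -/
def IsLocPoly (p : ℕ) [Fact p.Prime] (L : Type*) [NormedField L]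
    [NormedAlgebra ℚ_[p] L] (d : ℕ) (f : ℤ_[p] → L) : Prop :=
  ∃ N : ℕ, ∀ a : ℤ_[p], ∃ P : Polynomial L, P.natDegree ≤ d ∧
    ∀ t : ℤ_[p], f (a + (p : ℤ_[p]) ^ N * t) =
      P.eval (embL p L (a + (p : ℤ_[p]) ^ N * t))

section Aux

variable (p : ℕ) [hp : Fact p.Prime] (L : Type*) [NormedField L] [NormedAlgebra ℚ_[p] L]

include hp

lemma embL_natCast (n : ℕ) : embL p L (n : ℤ_[p]) = (n : L) := by
  simp [embL]

lemma norm_embL (z : ℤ_[p]) : ‖embL p L z‖ = ‖z‖ := by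
  rw [embL, norm_algebraMap', PadicInt.norm_def]

lemma norm_natL_le_one (n : ℕ) : ‖(n : L)‖ ≤ 1 := by
  have h : (n : L) = algebraMap ℚ_[p] L (n : ℚ_[p]) := (map_natCast (algebraMap ℚ_[p] L) n).symm
  rw [h, norm_algebraMap']
  have := Padic.norm_int_le_one (p := p) (n : ℤ)
  push_cast at this
  exact this

lemma ultraL : IsUltrametricDist L :=
  IsUltrametricDist.isUltrametricDist_of_forall_norm_natCast_le_one
    (fun n => norm_natL_le_one p L n)

lemma norm_pL : ‖((p : ℕ) : L)‖ = (p : ℝ)⁻¹ := by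
  have h : ((p : ℕ) : L) = algebraMap ℚ_[p] L (p : ℚ_[p]) :=
    (map_natCast (algebraMap ℚ_[p] L) p).symm
  rw [h, norm_algebraMap', Padic.norm_p]

lemma charZeroL : CharZero L :=
  charZero_of_injective_algebraMap (algebraMap ℚ_[p] L).injective

end Aux

section FwdDiffAux

variable {L : Type*} [NormedField L]

lemma norm_sub_le_max' [IsUltrametricDist L] (x y : L) : ‖x - y‖ ≤ max ‖x‖ ‖y‖ := by
  rw [sub_eq_add_neg]
  simpa using IsUltrametricDist.norm_add_le_max x (-y)

lemma fwdDiff_iter_norm_le [IsUltrametricDist L] {u : ℕ → L} {c : ℝ}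
    (hu : ∀ x, ‖u x‖ ≤ c) (n : ℕ) : ∀ x, ‖(fwdDiff 1)^[n] u x‖ ≤ c := by
  induction n with
  | zero => simpa using hu
  | succ n ih =>
      intro x
      rw [Function.iterate_succ_apply']
      exact le_trans (norm_sub_le_max' _ _) (max_le (ih _) (ih _))

lemma fwdDiff_iter_intCast (u : ℕ → ℤ) (n : ℕ) :
    ∀ x, (fwdDiff 1)^[n] (fun m => (u m : L)) x = (((fwdDiff 1)^[n] u x : ℤ) : L) := by
  induction n generalizing u with
  | zero => intro x; simp
  | succ n ih =>
      intro x
      rw [Function.iterate_succ_apply, Function.iterate_succ_apply]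
      have h : fwdDiff 1 (fun m => ((u m : ℤ) : L)) = fun m => ((fwdDiff 1 u m : ℤ) : L) := by
        funext m
        simp [fwdDiff]
      rw [h]
      exact ih (fwdDiff 1 u) x

end FwdDiffAux

section MahlerAux

variable {p : ℕ} [hp : Fact p.Prime] {L : Type*} [NormedField L]

lemma mahlerCoeff_eq_fwdDiff (f : ℤ_[p] → L) (n : ℕ) :
    mahlerCoeff f n = (fwdDiff 1)^[n] (fun x : ℕ => f (x : ℤ_[p])) 0 := by
  unfold mahlerCoeff
  rw [← Finset.sum_range_reflect]
  rw [fwdDiff_iter_eq_sum_shift]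
  refine Finset.sum_congr rfl fun i hi => ?_
  have hi' : i ≤ n := Nat.lt_succ_iff.mp (Finset.mem_range.mp hi)
  simp only [add_tsub_cancel_right, Nat.sub_sub_self hi', Nat.choose_symm hi', smul_eq_mul,
    mul_one, zero_add, zsmul_eq_mul]
  push_cast
  ring

lemma mahlerCoeff_sub (f g : ℤ_[p] → L) (n : ℕ) :
    mahlerCoeff (f - g) n = mahlerCoeff f n - mahlerCoeff g n := by
  simp only [mahlerCoeff, Pi.sub_apply, mul_sub, Finset.sum_sub_distrib]

end MahlerAux

section BinPoly

open Polynomial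

variable {L : Type*} [NormedField L]

noncomputable def binPoly (L : Type*) [NormedField L] (k : ℕ) : Polynomial L :=
  Polynomial.C (((k.factorial : L))⁻¹) * ∏ i ∈ Finset.range k, (Polynomial.X - Polynomial.C (i : L))

lemma binPoly_eval_nat [CharZero L] (k x : ℕ) :
    (binPoly L k).eval ((x : L)) = (x.choose k : L) := by
  rw [binPoly, eval_mul, eval_C, eval_prod]
  simp only [eval_sub, eval_X, eval_C]
  rcases le_or_gt k x with h | h
  · have hprod : (∏ i ∈ Finset.range k, ((x : L) - (i : L))) = (x.descFactorial k : L) := by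
      rw [Nat.descFactorial_eq_prod_range, Nat.cast_prod]
      refine Finset.prod_congr rfl fun i hi => ?_
      have hix : i ≤ x := le_trans (le_of_lt (Finset.mem_range.mp hi)) h
      rw [Nat.cast_sub hix]
    rw [hprod, Nat.descFactorial_eq_factorial_mul_choose, Nat.cast_mul, ← mul_assoc,
      inv_mul_cancel₀ (Nat.cast_ne_zero.2 k.factorial_ne_zero), one_mul]
  · have hx : x ∈ Finset.range k := Finset.mem_range.mpr h
    rw [Finset.prod_eq_zero hx (by simp), mul_zero, Nat.choose_eq_zero_of_lt h, Nat.cast_zero]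

end BinPoly

section Head

open Polynomial

variable {p : ℕ} [hp : Fact p.Prime] {L : Type*} [NormedField L] [NormedAlgebra ℚ_[p] L]

lemma mahler_head (a : ℕ → L) (M n : ℕ) :
    mahlerCoeff (fun z => (∑ k ∈ Finset.range M, C (a k) * binPoly L k).eval (embL p L z)) n
      = if n < M then a n else 0 := by
  haveI : CharZero L := charZeroL p L
  rw [mahlerCoeff_eq_fwdDiff]
  have hfun : (fun x : ℕ =>
      (∑ k ∈ Finset.range M, C (a k) * binPoly L k).eval (embL p L (x : ℤ_[p])))
      = ∑ k ∈ Finset.range M, (a k • fun x : ℕ => ((x.choose k : ℤ) : L)) := by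
    funext x
    rw [embL_natCast, eval_finset_sum]
    rw [Finset.sum_apply]
    refine Finset.sum_congr rfl fun k _ => ?_
    rw [eval_mul, eval_C, binPoly_eval_nat]
    push_cast
    simp [smul_eq_mul]
  rw [hfun, fwdDiff_iter_finset_sum]
  have hterm : ∀ k ∈ Finset.range M,
      (fwdDiff 1)^[n] (a k • fun x : ℕ => ((x.choose k : ℤ) : L)) 0
        = if n = k then a k else 0 := by
    intro k _
    rw [fwdDiff_iter_const_smul]
    have := fwdDiff_iter_intCast (L := L) (fun x : ℕ => (x.choose k : ℤ)) n 0
    rw [Pi.smul_apply, this, fwdDiff_iter_choose_zero]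
    by_cases hnk : n = k <;> simp [hnk, smul_eq_mul]
  rw [Finset.sum_apply, Finset.sum_congr rfl hterm, Finset.sum_ite_eq]
  by_cases hnM : n < M <;> simp [hnM, Finset.mem_range]

end Head

section LocEval

open Polynomial

variable {L : Type*} [NormedField L]

noncomputable def locEval (t : ℕ) (F : ℕ → Polynomial L) : ℕ → L :=
  fun x => (F (x % t)).eval (x : L)

/-- Degree drop for taylor-shift differences. -/
lemma natDegree_taylor_sub_le (Q : Polynomial L) (c : L) (m : ℕ) (hQ : Q.natDegree ≤ m + 1) :
    (Polynomial.taylor c Q - Q).natDegree ≤ m := by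
  rw [Polynomial.natDegree_le_iff_coeff_eq_zero]
  intro k hk
  rw [Polynomial.coeff_sub, Polynomial.taylor_coeff]
  rcases lt_or_ge Q.natDegree k with h | h
  · have hzero : Polynomial.hasseDeriv k Q = 0 := by
      ext n
      rw [Polynomial.hasseDeriv_coeff, Polynomial.coeff_eq_zero_of_natDegree_lt
        (lt_of_lt_of_le h (Nat.le_add_left _ _)), mul_zero, Polynomial.coeff_zero]
    rw [hzero, Polynomial.coeff_eq_zero_of_natDegree_lt h]
    simp
  · have hk2 : k = Q.natDegree := le_antisymm h (le_trans hQ (Nat.succ_le_of_lt hk))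
    have hC : Polynomial.hasseDeriv k Q = Polynomial.C (Q.coeff k) := by
      ext n
      rw [Polynomial.hasseDeriv_coeff, Polynomial.coeff_C]
      rcases Nat.eq_zero_or_pos n with hn | hn
      · subst hn; simp
      · have : Q.natDegree < n + k := by omega
        rw [Polynomial.coeff_eq_zero_of_natDegree_lt this, mul_zero, if_neg (by omega)]
    rw [hC]
    simp

def Ecoef (t i : ℕ) : ℤ := (-1) ^ (t - i) * t.choose i + (if i = 0 then 1 else 0)

noncomputable def Efun (t : ℕ) (u : ℕ → L) : ℕ → L :=
  fun x => ∑ i ∈ Finset.range t, Ecoef t i • u (x + i)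

noncomputable def AH (t : ℕ) (F : ℕ → Polynomial L) : ℕ → Polynomial L :=
  fun b => Polynomial.taylor ((t : ℕ) : L) (F b) - F b

noncomputable def EH (t : ℕ) (F : ℕ → Polynomial L) : ℕ → Polynomial L :=
  fun b => ∑ i ∈ Finset.range t, Ecoef t i • Polynomial.taylor ((i : ℕ) : L) (F ((b + i) % t))

lemma locEval_A (t : ℕ) (F : ℕ → Polynomial L) :
    (fun x => locEval t F (x + t) - locEval t F x) = locEval t (AH t F) := by
  funext x
  simp only [locEval, AH, Nat.add_mod_right, eval_sub, taylor_eval]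
  push_cast
  ring

lemma natDegree_AH_le (t : ℕ) (F : ℕ → Polynomial L) (m : ℕ)
    (hdeg : ∀ b, (F b).natDegree ≤ m + 1) : ∀ b, ((AH t F) b).natDegree ≤ m :=
  fun b => natDegree_taylor_sub_le _ _ _ (hdeg b)

lemma natDegree_zsmul_le (z : ℤ) (Q : Polynomial L) : (z • Q).natDegree ≤ Q.natDegree := by
  rw [zsmul_eq_mul, ← Polynomial.C_eq_intCast]
  exact Polynomial.natDegree_C_mul_le _ _

lemma natDegree_EH_le (t : ℕ) (F : ℕ → Polynomial L) (m : ℕ)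
    (hdeg : ∀ b, (F b).natDegree ≤ m) : ∀ b, ((EH t F) b).natDegree ≤ m := by
  intro b
  unfold EH
  refine Polynomial.natDegree_sum_le_of_forall_le _ _ fun i _ => ?_
  calc (Ecoef t i • Polynomial.taylor ((i : ℕ) : L) (F ((b + i) % t))).natDegree
      ≤ (Polynomial.taylor ((i : ℕ) : L) (F ((b + i) % t))).natDegree :=
        natDegree_zsmul_le _ _
    _ = (F ((b + i) % t)).natDegree := Polynomial.natDegree_taylor _ _
    _ ≤ m := hdeg _

lemma fwdDiff_pow_eq (t : ℕ) (ht : 0 < t) (u : ℕ → L) :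
    (fwdDiff 1)^[t] u = (fun x => u (x + t) - u x) + Efun t u := by
  funext x
  have hE : Efun t u x
      = (∑ i ∈ Finset.range t, ((-1 : ℤ) ^ (t - i) * t.choose i) • u (x + i)) + u x := by
    unfold Efun Ecoef
    simp only [add_smul, ite_smul, one_smul, zero_smul, Finset.sum_add_distrib]
    congr 1
    rw [Finset.sum_ite_eq' (Finset.range t) 0 (fun i => u (x + i))]
    simp [Finset.mem_range, ht]
  rw [Pi.add_apply, hE, fwdDiff_iter_eq_sum_shift, Finset.sum_range_succ]
  simp only [smul_eq_mul, mul_one, Nat.sub_self, pow_zero, Nat.choose_self, Nat.cast_one,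
    one_smul]
  abel

end LocEval

section Decay

open Polynomial

variable {p : ℕ} [hp : Fact p.Prime] {L : Type*} [NormedField L] [NormedAlgebra ℚ_[p] L]

lemma Ecoef_dvd (N i : ℕ) (hi : i < p ^ N) : (p : ℤ) ∣ Ecoef (p ^ N) i := by
  rcases eq_or_ne i 0 with rfl | hne
  · unfold Ecoef
    simp only [if_pos rfl, Nat.sub_zero, Nat.choose_zero_right, Nat.cast_one, mul_one]
    rcases Nat.even_or_odd (p ^ N) with he | ho
    · have hp2 : p = 2 := (Nat.Prime.even_iff hp.out).mp (Nat.even_pow.mp he).1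
      rw [he.neg_one_pow, hp2]
      norm_num
    · rw [ho.neg_one_pow]
      norm_num
  · unfold Ecoef
    rw [if_neg hne, add_zero]
    have hd : (p : ℤ) ∣ ((p ^ N).choose i : ℤ) := by
      exact_mod_cast Int.natCast_dvd_natCast.mpr
        (Nat.Prime.dvd_choose_pow hp.out hne (Nat.ne_of_lt hi))
    exact hd.mul_left _

include hp in
lemma Efun_norm_le [IsUltrametricDist L] (N : ℕ) (u : ℕ → L) (δ : ℝ)
    (hu : ∀ x, ‖u x‖ ≤ δ) : ∀ x, ‖Efun (p ^ N) u x‖ ≤ (p : ℝ)⁻¹ * δ := by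
  have hδ : 0 ≤ δ := le_trans (norm_nonneg _) (hu 0)
  intro x
  refine IsUltrametricDist.norm_sum_le_of_forall_le_of_nonneg
    (by positivity) (fun i hi => ?_)
  obtain ⟨w, hw⟩ := Ecoef_dvd (p := p) N i (Finset.mem_range.mp hi)
  rw [hw, zsmul_eq_mul]
  push_cast
  rw [mul_assoc, norm_mul]
  have h1 : ‖((p : ℕ) : L)‖ = (p : ℝ)⁻¹ := norm_pL p L
  push_cast at h1
  rw [h1]
  refine mul_le_mul_of_nonneg_left ?_ (by positivity)
  calc ‖(w : L) * u (x + i)‖ = ‖(w : L)‖ * ‖u (x + i)‖ := norm_mul _ _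
    _ ≤ 1 * δ := mul_le_mul (IsUltrametricDist.norm_intCast_le_one L w) (hu _)
        (norm_nonneg _) zero_le_one
    _ = δ := one_mul δ

lemma Efun_locEval (t : ℕ) (F : ℕ → Polynomial L) :
    Efun t (locEval t F) = locEval t (EH t F) := by
  funext x
  unfold EH
  simp only [Efun, locEval, eval_finset_sum, Polynomial.eval_smul, taylor_eval]
  refine Finset.sum_congr rfl fun i _ => ?_
  have hmod : (x + i) % t = (x % t + i) % t := by
    conv_lhs => rw [Nat.add_mod]
    rw [Nat.add_mod (x % t) i, Nat.mod_mod_of_dvd _ dvd_rfl]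
  rw [hmod]
  push_cast
  ring_nf

end Decay

section DecayCore

open Polynomial

variable {p : ℕ} [hp : Fact p.Prime] {L : Type*} [NormedField L] [NormedAlgebra ℚ_[p] L]

include hp in
lemma decay [IsUltrametricDist L] (N m : ℕ) :
    ∀ (k : ℕ) (F : ℕ → Polynomial L) (δ : ℝ),
      (∀ b, (F b).natDegree ≤ m) → (∀ x, ‖locEval (p ^ N) F x‖ ≤ δ) →
      ∀ x, ‖(fwdDiff 1)^[p ^ N * k] (locEval (p ^ N) F) x‖
        ≤ δ * (p : ℝ) ^ (m + 1) * ((p : ℝ)⁻¹) ^ k := by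
  have ht : 0 < p ^ N := pow_pos hp.out.pos N
  have hp0 : (p : ℝ) ≠ 0 := Nat.cast_ne_zero.mpr hp.out.pos.ne'
  have hp1 : (1 : ℝ) ≤ (p : ℝ) := by exact_mod_cast hp.out.one_lt.le
  induction m with
  | zero =>
    intro k
    induction k with
    | zero =>
        intro F δ hdeg hbd x
        have hδ : 0 ≤ δ := le_trans (norm_nonneg _) (hbd 0)
        simp only [Nat.mul_zero, Function.iterate_zero, id_eq, pow_zero, mul_one]
        exact le_trans (hbd x) (le_mul_of_one_le_right hδ (one_le_pow₀ hp1))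
    | succ k ihk =>
        intro F δ hdeg hbd x
        have hδ : 0 ≤ δ := le_trans (norm_nonneg _) (hbd 0)
        rw [Nat.mul_succ, Function.iterate_add_apply, fwdDiff_pow_eq (p ^ N) ht]
        have hA : ((fun x => locEval (p ^ N) F (x + p ^ N) - locEval (p ^ N) F x)
            + Efun (p ^ N) (locEval (p ^ N) F)) = Efun (p ^ N) (locEval (p ^ N) F) := by
          funext y
          rw [Pi.add_apply]
          have h0 : locEval (p ^ N) F (y + p ^ N) = locEval (p ^ N) F y := by
            unfold locEval
            rw [Nat.add_mod_right, Polynomial.eq_C_of_natDegree_le_zero (hdeg (y % p ^ N))]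
            simp
          rw [h0, sub_self, zero_add]
        rw [hA, Efun_locEval]
        have hbdH := Efun_norm_le (p := p) N (locEval (p ^ N) F) δ hbd
        rw [Efun_locEval] at hbdH
        have hthis := ihk (EH (p ^ N) F) ((p : ℝ)⁻¹ * δ)
          (natDegree_EH_le _ _ _ hdeg) hbdH x
        have heq : (p : ℝ)⁻¹ * δ * (p : ℝ) ^ (0 + 1) * ((p : ℝ)⁻¹) ^ k
            = δ * (p : ℝ) ^ (0 + 1) * ((p : ℝ)⁻¹) ^ (k + 1) := by
          rw [pow_succ]; ring
        rw [← heq]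
        exact hthis
  | succ m ihm =>
    intro k
    induction k with
    | zero =>
        intro F δ hdeg hbd x
        have hδ : 0 ≤ δ := le_trans (norm_nonneg _) (hbd 0)
        simp only [Nat.mul_zero, Function.iterate_zero, id_eq, pow_zero, mul_one]
        exact le_trans (hbd x) (le_mul_of_one_le_right hδ (one_le_pow₀ hp1))
    | succ k ihk =>
        intro F δ hdeg hbd x
        have hδ : 0 ≤ δ := le_trans (norm_nonneg _) (hbd 0)
        rw [Nat.mul_succ, Function.iterate_add_apply, fwdDiff_pow_eq (p ^ N) ht,
          fwdDiff_iter_add, Pi.add_apply]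
        refine le_trans (IsUltrametricDist.norm_add_le_max _ _) (max_le ?_ ?_)
        · rw [locEval_A]
          have hbd1 : ∀ x, ‖locEval (p ^ N) (AH (p ^ N) F) x‖ ≤ δ := by
            intro y
            rw [← locEval_A]
            exact le_trans (norm_sub_le_max' _ _) (max_le (hbd _) (hbd _))
          have hthis := ihm k (AH (p ^ N) F) δ (natDegree_AH_le _ _ _ hdeg) hbd1 x
          have heq : δ * (p : ℝ) ^ (m + 1 + 1) * ((p : ℝ)⁻¹) ^ (k + 1)
              = δ * (p : ℝ) ^ (m + 1) * ((p : ℝ)⁻¹) ^ k := by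
            rw [pow_succ, pow_succ]
            calc δ * ((p : ℝ) ^ (m + 1) * (p : ℝ)) * (((p : ℝ)⁻¹) ^ k * (p : ℝ)⁻¹)
                = δ * (p : ℝ) ^ (m + 1) * ((p : ℝ)⁻¹) ^ k * ((p : ℝ) * (p : ℝ)⁻¹) := by ring
              _ = δ * (p : ℝ) ^ (m + 1) * ((p : ℝ)⁻¹) ^ k := by
                  rw [mul_inv_cancel₀ hp0, mul_one]
          rw [heq]
          exact hthis
        · rw [Efun_locEval]
          have hbdH := Efun_norm_le (p := p) N (locEval (p ^ N) F) δ hbd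
          rw [Efun_locEval] at hbdH
          have hthis := ihk (EH (p ^ N) F) ((p : ℝ)⁻¹ * δ)
            (natDegree_EH_le _ _ _ hdeg) hbdH x
          have heq : (p : ℝ)⁻¹ * δ * (p : ℝ) ^ (m + 1 + 1) * ((p : ℝ)⁻¹) ^ k
              = δ * (p : ℝ) ^ (m + 1 + 1) * ((p : ℝ)⁻¹) ^ (k + 1) := by
            rw [pow_succ]; ring
          rw [← heq]
          exact hthis

end DecayCore

section Constants

open Filter

lemma exists_Cr (r : ℝ) (P : ℝ) (hP : 1 < P) :
    ∃ C : ℝ, 0 ≤ C ∧ ∀ k : ℕ, ((k : ℝ) + 1) ^ r * (P⁻¹) ^ k ≤ C := by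
  have hP0 : 0 < P := lt_trans zero_lt_one hP
  set c := ⌈r⌉₊ with hc
  have hnorm : ‖P⁻¹‖ < 1 := by
    rw [Real.norm_eq_abs, abs_of_nonneg (by positivity)]
    exact inv_lt_one_of_one_lt₀ hP
  have hv : Tendsto (fun n : ℕ => (n : ℝ) ^ c * (P⁻¹) ^ n) atTop (nhds 0) :=
    (summable_pow_mul_geometric_of_norm_lt_one c hnorm).tendsto_atTop_zero
  obtain ⟨B, hB⟩ := hv.bddAbove_range
  refine ⟨max (P * B) 0, le_max_right _ _, fun k => le_trans ?_ (le_max_left _ _)⟩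
  have hk1 : (0 : ℝ) ≤ (k : ℝ) + 1 := by positivity
  have h1 : ((k : ℝ) + 1) ^ r ≤ ((k : ℝ) + 1) ^ (c : ℝ) :=
    Real.rpow_le_rpow_of_exponent_le (by linarith [Nat.cast_nonneg (α := ℝ) k]) (Nat.le_ceil r)
  have h1' : ((k : ℝ) + 1) ^ (c : ℝ) = ((k : ℝ) + 1) ^ c := Real.rpow_natCast _ c
  have hvk : ((k + 1 : ℕ) : ℝ) ^ c * (P⁻¹) ^ (k + 1) ≤ B :=
    hB (Set.mem_range_self (k + 1))
  have hq : (P⁻¹) ^ k = P * (P⁻¹) ^ (k + 1) := by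
    rw [pow_succ, ← mul_assoc, mul_comm P]
    rw [mul_assoc, mul_inv_cancel₀ hP0.ne', mul_one]
  calc ((k : ℝ) + 1) ^ r * (P⁻¹) ^ k ≤ ((k : ℝ) + 1) ^ c * (P⁻¹) ^ k := by
        rw [← h1']
        exact mul_le_mul_of_nonneg_right h1 (by positivity)
    _ = P * (((k + 1 : ℕ) : ℝ) ^ c * (P⁻¹) ^ (k + 1)) := by
        push_cast
        rw [hq]
        ring
    _ ≤ P * B := mul_le_mul_of_nonneg_left hvk hP0.le

end Constants

section CoeffBound

open Polynomial

variable {p : ℕ} [hp : Fact p.Prime] {L : Type*} [NormedField L] [NormedAlgebra ℚ_[p] L]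

noncomputable def CP (P : Polynomial L) : ℝ := ∑ i ∈ Finset.range (P.natDegree + 1), ‖P.coeff i‖

lemma CP_nonneg (P : Polynomial L) : 0 ≤ CP P :=
  Finset.sum_nonneg fun _ _ => norm_nonneg _

lemma norm_coeff_le_CP (P : Polynomial L) (i : ℕ) : ‖P.coeff i‖ ≤ CP P := by
  rcases lt_or_ge P.natDegree i with h | h
  · rw [Polynomial.coeff_eq_zero_of_natDegree_lt h, norm_zero]
    exact CP_nonneg P
  · exact Finset.single_le_sum (f := fun i => ‖P.coeff i‖) (fun _ _ => norm_nonneg _)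
      (Finset.mem_range.mpr (by omega))

include hp in
lemma norm_taylor_coeff_le [IsUltrametricDist L] (P : Polynomial L) (b : L) (hb : ‖b‖ ≤ 1)
    (j : ℕ) : ‖(Polynomial.taylor b P).coeff j‖ ≤ CP P := by
  rw [Polynomial.taylor_coeff, Polynomial.eval_eq_sum_range]
  refine IsUltrametricDist.norm_sum_le_of_forall_le_of_nonneg (CP_nonneg P) fun i _ => ?_
  rw [Polynomial.hasseDeriv_coeff]
  calc ‖((i + j).choose j : L) * P.coeff (i + j) * b ^ i‖
      = ‖((i + j).choose j : L)‖ * ‖P.coeff (i + j)‖ * ‖b ^ i‖ := by rw [norm_mul, norm_mul]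
    _ ≤ 1 * ‖P.coeff (i + j)‖ * 1 := by
        refine mul_le_mul (mul_le_mul (norm_natL_le_one p L _) le_rfl (norm_nonneg _)
          zero_le_one) ?_ (norm_nonneg _) (by positivity)
        rw [norm_pow]
        exact pow_le_one₀ (norm_nonneg _) hb
    _ = ‖P.coeff (i + j)‖ := by ring
    _ ≤ CP P := norm_coeff_le_CP P _

end CoeffBound

section Trunc

open Polynomial

variable {p : ℕ} [hp : Fact p.Prime] {L : Type*} [NormedField L] [NormedAlgebra ℚ_[p] L]

noncomputable def Qtrunc (P : Polynomial L) (d : ℕ) (b : L) : Polynomial L :=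
  ∑ j ∈ Finset.range (d + 1),
    Polynomial.C ((Polynomial.taylor b P).coeff j) * (Polynomial.X - Polynomial.C b) ^ j

noncomputable def Ftail (P : Polynomial L) (d : ℕ) (b : L) : Polynomial L :=
  ∑ j ∈ Finset.Ico (d + 1) (max (P.natDegree + 1) (d + 1)),
    Polynomial.C ((Polynomial.taylor b P).coeff j) * (Polynomial.X - Polynomial.C b) ^ j

lemma Qtrunc_add_Ftail (P : Polynomial L) (d : ℕ) (b : L) :
    Qtrunc P d b + Ftail P d b = P := by
  rw [Qtrunc, Ftail, Finset.range_eq_Ico,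
    Finset.sum_Ico_consecutive _ (Nat.zero_le _) (le_max_right _ _), ← Finset.range_eq_Ico]
  conv_rhs => rw [← Polynomial.sum_taylor_eq P b]
  rw [Polynomial.sum_over_range' _ (by intro n; simp) _
    (lt_of_le_of_lt (le_of_eq (Polynomial.natDegree_taylor P b))
      (lt_of_lt_of_le (Nat.lt_succ_self _) (le_max_left _ _)))]

lemma natDegree_Qtrunc_le (P : Polynomial L) (d : ℕ) (b : L) :
    (Qtrunc P d b).natDegree ≤ d := by
  unfold Qtrunc
  refine Polynomial.natDegree_sum_le_of_forall_le _ _ fun j hj => ?_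
  refine le_trans (Polynomial.natDegree_C_mul_le _ _) (le_trans Polynomial.natDegree_pow_le ?_)
  calc j * (Polynomial.X - Polynomial.C b).natDegree ≤ j * 1 :=
        Nat.mul_le_mul_left _ (Polynomial.natDegree_X_sub_C_le b)
    _ ≤ d := by rw [mul_one]; exact Nat.lt_succ_iff.mp (Finset.mem_range.mp hj)

lemma natDegree_Ftail_le (P : Polynomial L) (d : ℕ) (b : L) :
    (Ftail P d b).natDegree ≤ max (P.natDegree + 1) (d + 1) - 1 := by
  unfold Ftail
  refine Polynomial.natDegree_sum_le_of_forall_le _ _ fun j hj => ?_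
  refine le_trans (Polynomial.natDegree_C_mul_le _ _) (le_trans Polynomial.natDegree_pow_le ?_)
  have hj' := (Finset.mem_Ico.mp hj).2
  calc j * (Polynomial.X - Polynomial.C b).natDegree ≤ j * 1 :=
        Nat.mul_le_mul_left _ (Polynomial.natDegree_X_sub_C_le b)
    _ ≤ max (P.natDegree + 1) (d + 1) - 1 := by rw [mul_one]; omega

include hp in
lemma norm_Ftail_eval_le [IsUltrametricDist L] (P : Polynomial L) (d N : ℕ) (b : L)
    (hb : ‖b‖ ≤ 1) (X : L) (hX : ‖X - b‖ ≤ ((p : ℝ)⁻¹) ^ N) :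
    ‖(Ftail P d b).eval X‖ ≤ CP P * ((p : ℝ)⁻¹) ^ (N * (d + 1)) := by
  have hq0 : (0 : ℝ) ≤ (p : ℝ)⁻¹ := by positivity
  have hq1 : (p : ℝ)⁻¹ ≤ 1 := by
    rw [inv_le_one_iff₀]
    right
    exact_mod_cast hp.out.one_le
  rw [Ftail, eval_finset_sum]
  refine IsUltrametricDist.norm_sum_le_of_forall_le_of_nonneg
    (mul_nonneg (CP_nonneg P) (by positivity)) fun j hj => ?_
  have hj' := (Finset.mem_Ico.mp hj).1
  rw [eval_mul, eval_C, eval_pow, eval_sub, eval_X, eval_C, norm_mul, norm_pow]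
  calc ‖(Polynomial.taylor b P).coeff j‖ * ‖X - b‖ ^ j
      ≤ CP P * (((p : ℝ)⁻¹) ^ N) ^ j := by
        refine mul_le_mul (norm_taylor_coeff_le (p := p) P b hb j)
          (pow_le_pow_left₀ (norm_nonneg _) hX j) (by positivity) (CP_nonneg P)
    _ ≤ CP P * (((p : ℝ)⁻¹) ^ N) ^ (d + 1) := by
        refine mul_le_mul_of_nonneg_left ?_ (CP_nonneg P)
        exact pow_le_pow_of_le_one (by positivity) (pow_le_one₀ hq0 hq1) hj'
    _ = CP P * ((p : ℝ)⁻¹) ^ (N * (d + 1)) := by rw [← pow_mul]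

noncomputable def bZ (p : ℕ) [Fact p.Prime] (N : ℕ) (z : ℤ_[p]) : ℕ :=
  (PadicInt.toZModPow N z).val

lemma bZ_natCast (N x : ℕ) : bZ p N (x : ℤ_[p]) = x % p ^ N := by
  haveI : NeZero (p ^ N) := ⟨pow_ne_zero _ hp.out.pos.ne'⟩
  rw [bZ, map_natCast, ZMod.val_natCast]

lemma bZ_add_pow (N : ℕ) (a t : ℤ_[p]) : bZ p N (a + (p : ℤ_[p]) ^ N * t) = bZ p N a := by
  rw [bZ, bZ, map_add, map_mul, map_pow, map_natCast]
  rw [show ((p : ZMod (p ^ N)) ^ N : ZMod (p ^ N)) = 0 by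
    rw [← Nat.cast_pow, ZMod.natCast_self]]
  rw [zero_mul, add_zero]

lemma norm_sub_bZ (N x : ℕ) :
    ‖((x : L) - ((x % p ^ N : ℕ) : L))‖ ≤ ((p : ℝ)⁻¹) ^ N := by
  have hker : ((x : ℤ_[p]) - ((x % p ^ N : ℕ) : ℤ_[p])) ∈
      Ideal.span {(p : ℤ_[p]) ^ N} := by
    rw [← PadicInt.ker_toZModPow, RingHom.mem_ker, map_sub, map_natCast, map_natCast,
      ZMod.natCast_mod, sub_self]
  have hnorm : ‖((x : ℤ_[p]) - ((x % p ^ N : ℕ) : ℤ_[p]))‖ ≤ (p : ℝ) ^ (-(N : ℤ)) :=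
    (PadicInt.norm_le_pow_iff_mem_span_pow _ N).mpr hker
  have hcast : ((x : L) - ((x % p ^ N : ℕ) : L))
      = embL p L ((x : ℤ_[p]) - ((x % p ^ N : ℕ) : ℤ_[p])) := by
    simp only [embL, PadicInt.coe_sub, map_sub, PadicInt.coe_natCast, map_natCast]
  rw [hcast, norm_embL]
  calc ‖((x : ℤ_[p]) - ((x % p ^ N : ℕ) : ℤ_[p]))‖ ≤ (p : ℝ) ^ (-(N : ℤ)) := hnorm
    _ = ((p : ℝ)⁻¹) ^ N := by rw [zpow_neg, zpow_natCast, inv_pow]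

end Trunc

open Polynomial in
/-- (Amice–Vélu, Vishik) Locally polynomial functions on `ℤ_p` of local degree at most
`d` are dense in `C^r(ℤ_p, L)` whenever `r − 1 < d`. -/
theorem locPoly_dense_in_cr
    (p : ℕ) [Fact p.Prime]
    (L : Type*) [NormedField L] [NormedAlgebra ℚ_[p] L] [CompleteSpace L]
    (r : ℝ) (hr : 0 ≤ r) (d : ℕ) (hd : r - 1 < (d : ℝ)) :
    ∀ f : ℤ_[p] → L, IsCr r f → ∀ ε : ℝ, 0 < ε →
      ∃ g : ℤ_[p] → L, IsLocPoly p L d g ∧ crNorm r (f - g) < ε := by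
  intro f hf ε hε
  haveI hu : IsUltrametricDist L := ultraL p L
  have hp1 : (1 : ℝ) < (p : ℝ) := by exact_mod_cast (Fact.out : p.Prime).one_lt
  have hp0 : (0 : ℝ) < (p : ℝ) := lt_trans zero_lt_one hp1
  set q : ℝ := (p : ℝ)⁻¹ with hqdef
  have hq0 : 0 < q := by positivity
  -- Step 1: tail cutoff M
  have h2r : (0 : ℝ) < (2 : ℝ) ^ r := Real.rpow_pos_of_pos two_pos r
  have hε4 : 0 < ε / 2 / (2 : ℝ) ^ r := by positivity
  obtain ⟨M₀, hM₀⟩ := Filter.eventually_atTop.mp (hf.2.eventually_lt_const hε4)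
  set M := max M₀ 1 with hM
  have htail : ∀ n, M ≤ n → ((n : ℝ) + 1) ^ r * ‖mahlerCoeff f n‖ ≤ ε / 2 := by
    intro n hn
    have hn1 : 1 ≤ n := le_trans (le_max_right _ _) hn
    have hn1' : (1 : ℝ) ≤ (n : ℝ) := by exact_mod_cast hn1
    have hle : ((n : ℝ) + 1) ^ r ≤ (2 : ℝ) ^ r * (n : ℝ) ^ r := by
      rw [← Real.mul_rpow two_pos.le (Nat.cast_nonneg n)]
      exact Real.rpow_le_rpow (by positivity) (by linarith) hr
    have h2 := hM₀ n (le_trans (le_max_left _ _) hn)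
    calc ((n : ℝ) + 1) ^ r * ‖mahlerCoeff f n‖
        ≤ (2 : ℝ) ^ r * (n : ℝ) ^ r * ‖mahlerCoeff f n‖ :=
          mul_le_mul_of_nonneg_right hle (norm_nonneg _)
      _ = (2 : ℝ) ^ r * ((n : ℝ) ^ r * ‖mahlerCoeff f n‖) := by ring
      _ ≤ (2 : ℝ) ^ r * (ε / 2 / (2 : ℝ) ^ r) := mul_le_mul_of_nonneg_left h2.le h2r.le
      _ = ε / 2 := by field_simp
  -- Step 2: head polynomial
  set P : Polynomial L := ∑ k ∈ Finset.range M, Polynomial.C (mahlerCoeff f k) * binPoly L k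
    with hP
  set h : ℤ_[p] → L := fun z => P.eval (embL p L z) with hh
  have hmh : ∀ n, mahlerCoeff h n = if n < M then mahlerCoeff f n else 0 := by
    intro n
    exact mahler_head (fun k => mahlerCoeff f k) M n
  -- Step 3: constants
  set m' : ℕ := max (P.natDegree + 1) (d + 1) - 1 with hm'
  obtain ⟨Cr, hCr0, hCr⟩ := exists_Cr r (p : ℝ) hp1
  set K : ℝ := CP P * (p : ℝ) ^ (m' + 1) * Cr with hK
  set θ : ℝ := (p : ℝ) ^ r * q ^ (d + 1) with hθ
  have hθ0 : 0 ≤ θ := mul_nonneg (Real.rpow_nonneg hp0.le r) (by positivity)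
  have hθ1 : θ < 1 := by
    have h1 : (p : ℝ) ^ r < (p : ℝ) ^ ((d : ℝ) + 1) :=
      (Real.rpow_lt_rpow_left_iff hp1).mpr (by linarith)
    have h2 : (p : ℝ) ^ ((d : ℝ) + 1) = (p : ℝ) ^ (d + 1 : ℕ) := by
      rw [← Real.rpow_natCast (p : ℝ) (d + 1)]
      push_cast
      ring_nf
    have h3 : (p : ℝ) ^ (d + 1 : ℕ) * q ^ (d + 1) = 1 := by
      rw [hqdef, ← mul_pow, mul_inv_cancel₀ hp0.ne', one_pow]
    calc θ < (p : ℝ) ^ (d + 1 : ℕ) * q ^ (d + 1) := by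
          refine mul_lt_mul_of_pos_right ?_ (by positivity)
          rw [← h2]
          exact h1
      _ = 1 := h3
  -- Step 4: choose N
  have htend : Filter.Tendsto (fun N : ℕ => K * θ ^ N) Filter.atTop (nhds 0) := by
    have := tendsto_pow_atTop_nhds_zero_of_lt_one hθ0 hθ1
    simpa using this.const_mul K
  obtain ⟨N, hN'⟩ := Filter.eventually_atTop.mp
    (htend.eventually_lt_const (show (0 : ℝ) < ε / 2 by positivity))
  have hN : K * θ ^ N < ε / 2 := hN' N le_rfl
  -- Step 5: define g
  set g : ℤ_[p] → L := fun z => (Qtrunc P d ((bZ p N z : ℕ) : L)).eval (embL p L z) with hg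
  refine ⟨g, ⟨N, fun a => ⟨Qtrunc P d ((bZ p N a : ℕ) : L), natDegree_Qtrunc_le _ _ _,
    fun t => by rw [hg]; simp only; rw [bZ_add_pow]⟩⟩, ?_⟩
  -- Step 6: estimates
  set Fb : ℕ → Polynomial L := fun b => Ftail P d ((b : ℕ) : L) with hFb
  have hGloc : (fun x : ℕ => (h - g) ((x : ℕ) : ℤ_[p])) = locEval (p ^ N) Fb := by
    funext x
    simp only [Pi.sub_apply, hh, hg, locEval, hFb]
    rw [bZ_natCast, embL_natCast]
    have hQF := congrArg (Polynomial.eval ((x : ℕ) : L)) (Qtrunc_add_Ftail P d ((x % p ^ N : ℕ) : L))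
    rw [Polynomial.eval_add] at hQF
    rw [← hQF]
    ring
  have hdegF : ∀ b, (Fb b).natDegree ≤ m' := fun b => natDegree_Ftail_le P d _
  set δ : ℝ := CP P * q ^ (N * (d + 1)) with hδdef
  have hbdF : ∀ x, ‖locEval (p ^ N) Fb x‖ ≤ δ := by
    intro x
    rw [locEval]
    exact norm_Ftail_eval_le (p := p) P d N _ (norm_natL_le_one p L _) _ (norm_sub_bZ N x)
  have hcoefbound : ∀ n, ‖mahlerCoeff (h - g) n‖ ≤ δ * (p : ℝ) ^ (m' + 1) * q ^ (n / p ^ N) := by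
    intro n
    rw [mahlerCoeff_eq_fwdDiff, hGloc]
    have hdecay := decay (p := p) N m' (n / p ^ N) Fb δ hdegF hbdF
    have hsplit : (fwdDiff 1)^[n] (locEval (p ^ N) Fb) 0
        = (fwdDiff 1)^[n % p ^ N] ((fwdDiff 1)^[p ^ N * (n / p ^ N)] (locEval (p ^ N) Fb)) 0 := by
      rw [← Function.iterate_add_apply, Nat.mod_add_div]
    rw [hsplit]
    exact fwdDiff_iter_norm_le (fun x => hdecay x) _ 0
  have hmain : ∀ n : ℕ, ((n : ℝ) + 1) ^ r * ‖mahlerCoeff (h - g) n‖ ≤ K * θ ^ N := by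
    intro n
    set k := n / p ^ N with hk
    have hnlt : n < p ^ N * (k + 1) := by
      have h1 := Nat.mod_lt n (pow_pos (Fact.out : p.Prime).pos N)
      calc n = n % p ^ N + p ^ N * k := (Nat.mod_add_div n (p ^ N)).symm
        _ < p ^ N + p ^ N * k := by omega
        _ = p ^ N * (k + 1) := by ring
    have hn1 : (n : ℝ) + 1 ≤ (p : ℝ) ^ N * ((k : ℝ) + 1) := by
      have : (n + 1 : ℕ) ≤ p ^ N * (k + 1) := hnlt
      exact_mod_cast this
    have h1 : ((n : ℝ) + 1) ^ r ≤ ((p : ℝ) ^ N) ^ r * ((k : ℝ) + 1) ^ r := by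
      rw [← Real.mul_rpow (by positivity) (by positivity)]
      exact Real.rpow_le_rpow (by positivity) hn1 hr
    calc ((n : ℝ) + 1) ^ r * ‖mahlerCoeff (h - g) n‖
        ≤ (((p : ℝ) ^ N) ^ r * ((k : ℝ) + 1) ^ r) * (δ * (p : ℝ) ^ (m' + 1) * q ^ k) :=
          mul_le_mul h1 (hcoefbound n) (norm_nonneg _) (by positivity)
      _ = (CP P * (p : ℝ) ^ (m' + 1)) * (((k : ℝ) + 1) ^ r * q ^ k)
            * (((p : ℝ) ^ N) ^ r * q ^ (N * (d + 1))) := by rw [hδdef]; ring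
      _ ≤ (CP P * (p : ℝ) ^ (m' + 1)) * Cr * (((p : ℝ) ^ N) ^ r * q ^ (N * (d + 1))) := by
          refine mul_le_mul_of_nonneg_right (mul_le_mul_of_nonneg_left (hCr k)
            (mul_nonneg (CP_nonneg P) (by positivity))) (by positivity)
      _ = K * θ ^ N := by
          rw [hK, hθ]
          have hpow : ((p : ℝ) ^ N) ^ r = ((p : ℝ) ^ r) ^ N := by
            rw [← Real.rpow_natCast (p : ℝ) N, ← Real.rpow_natCast ((p : ℝ) ^ r) N,
              ← Real.rpow_mul hp0.le, ← Real.rpow_mul hp0.le, mul_comm]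
          rw [hpow, mul_comm N (d + 1), pow_mul, mul_pow]
  have hbound : ∀ n : ℕ, ((n : ℝ) + 1) ^ r * ‖mahlerCoeff (f - g) n‖ ≤ ε / 2 := by
    intro n
    have hsplitf : mahlerCoeff (f - g) n = mahlerCoeff (f - h) n + mahlerCoeff (h - g) n := by
      rw [mahlerCoeff_sub, mahlerCoeff_sub, mahlerCoeff_sub]
      ring
    rw [hsplitf]
    have hmax := IsUltrametricDist.norm_add_le_max (mahlerCoeff (f - h) n)
      (mahlerCoeff (h - g) n)
    have hrn : (0 : ℝ) ≤ ((n : ℝ) + 1) ^ r := by positivity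
    calc ((n : ℝ) + 1) ^ r * ‖mahlerCoeff (f - h) n + mahlerCoeff (h - g) n‖
        ≤ ((n : ℝ) + 1) ^ r * max ‖mahlerCoeff (f - h) n‖ ‖mahlerCoeff (h - g) n‖ :=
          mul_le_mul_of_nonneg_left hmax hrn
      _ = max (((n : ℝ) + 1) ^ r * ‖mahlerCoeff (f - h) n‖)
            (((n : ℝ) + 1) ^ r * ‖mahlerCoeff (h - g) n‖) := mul_max_of_nonneg _ _ hrn
      _ ≤ ε / 2 := by
          refine max_le ?_ (le_trans (hmain n) hN.le)
          rw [mahlerCoeff_sub, hmh n]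
          by_cases hnM : n < M
          · rw [if_pos hnM, sub_self, norm_zero, mul_zero]
            positivity
          · rw [if_neg hnM, sub_zero]
            exact htail n (le_of_not_gt hnM)
  have hfinal : crNorm r (f - g) ≤ ε / 2 := Real.iSup_le hbound (by positivity)
  linarith
end

section
/- Let N_1, N_2 be finitely generated free E^+ = L ⊗ O_L[[X]]-submodules of a common module, both stable under Γ with Γ acting trivially modulo X through a finite quotient, and suppose X^r N_1 ⊆ N_2 for some r ≥ 1. If an open subgroup of Γ acts by the character χ^r on X^r N_1 / X^{r+1} N_1 and trivially on N_2 / X N_2, then already X^{r−1} N_1 ⊆ N_2; consequently N_1 ⊆ N_2 (and by symmetry N_1 = N_2 if also X^s N_2 ⊆ N_1 for some s). This is the uniqueness argument for Wach modules. -/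
/-!
For `m ∈ N₁` the element `y = x ^ (t + 1) • m` lies in `N₂`, and `γ` acts on it in two
ways: `γ y ≡ u ^ (t + 1) • y` modulo `x ^ (t + 2) N₁ ⊆ x N₂`, and `γ y ≡ y` modulo `x N₂`.
Subtracting, `(u ^ (t + 1) - 1) • x • (x ^ t • m) ∈ x N₂`; since `u ^ (t + 1) - 1` is a
unit and `x` is regular, `x ^ t • m ∈ N₂`. Repeating this lowers the exponent to `0`.
-/

section WachDescent

variable {R M : Type*} [CommRing R] [AddCommGroup M] [Module R M]

theorem Submodule.mem_of_isUnit_smul_smul_eq {x a : R} (hx : IsSMulRegular M x)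
    (ha : IsUnit a) (B : Submodule R M) {z b : M} (hb : b ∈ B) (h : a • x • z = x • b) :
    z ∈ B := by
  have hab : a • z = b := hx (show x • a • z = x • b by rw [← h, smul_comm])
  exact (B.smul_mem_iff_of_isUnit ha).mp (hab ▸ hb)

variable {x : R} {g : M → M} {A B : Submodule R M}

theorem smul_pow_mem_of_smul_pow_succ_mem (hx : IsSMulRegular M x) {v : R}
    (hv : IsUnit (v - 1)) (t : ℕ)
    (hχ : ∀ m ∈ A, ∃ m' ∈ A, g (x ^ (t + 1) • m) - v • (x ^ (t + 1) • m) = x ^ (t + 2) • m')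
    (htriv : ∀ b ∈ B, ∃ b' ∈ B, g b - b = x • b')
    (h : ∀ m ∈ A, x ^ (t + 1) • m ∈ B) :
    ∀ m ∈ A, x ^ t • m ∈ B := by
  intro m hm
  obtain ⟨m', hm', hgA⟩ := hχ m hm
  obtain ⟨b', hb', hgB⟩ := htriv _ (h m hm)
  refine B.mem_of_isUnit_smul_smul_eq hx hv (B.sub_mem hb' (h m' hm')) ?_
  linear_combination (norm := module) hgB - hgA

theorem le_of_smul_pow_mem (hx : IsSMulRegular M x) {u : R}
    (hu : ∀ s : ℕ, 1 ≤ s → IsUnit (u ^ s - 1))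
    (hχ : ∀ s : ℕ, 1 ≤ s → ∀ m ∈ A, ∃ m' ∈ A,
      g (x ^ s • m) - u ^ s • (x ^ s • m) = x ^ (s + 1) • m')
    (htriv : ∀ b ∈ B, ∃ b' ∈ B, g b - b = x • b') :
    ∀ t : ℕ, (∀ m ∈ A, x ^ t • m ∈ B) → A ≤ B
  | 0, h => fun m hm => by simpa using h m hm
  | t + 1, h => le_of_smul_pow_mem hx hu hχ htriv t <|
      smul_pow_mem_of_smul_pow_succ_mem hx (hu _ t.succ_pos) t (hχ _ t.succ_pos) htriv h

end WachDescent

/-- The uniqueness argument for Wach modules.  Let `N₁, N₂` be submodules of a module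
`M` over a ring `R` (playing the role of finitely generated free `E^+`-submodules of a
common module), `x ∈ R` (playing `X`), `g : M → M` the action of an element `γ` of an
open subgroup of `Γ`, and `u ∈ R` the scalar `χ(γ)`, with `u^s − 1` invertible, `x`
regular on `M`, `γ` acting by `χ^s` on `x^s Nᵢ / x^{s+1} Nᵢ` and trivially on
`Nᵢ / x Nᵢ`.  If `x^r N₁ ⊆ N₂` for some `r ≥ 1`, then already `x^{r−1} N₁ ⊆ N₂`;
consequently `N₁ ⊆ N₂` (and, by symmetry, `N₁ = N₂` if also `x^s N₂ ⊆ N₁` for some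
`s`). -/
theorem wach_module_uniqueness
    (R : Type*) [CommRing R] (M : Type*) [AddCommGroup M] [Module R M]
    (x u : R)
    (hxreg : ∀ m : M, x • m = 0 → m = 0)
    (hu : ∀ s : ℕ, 1 ≤ s → IsUnit (u ^ s - 1))
    (N₁ N₂ : Submodule R M)
    (g : M → M)
    (hχ₁ : ∀ s : ℕ, 1 ≤ s → ∀ m ∈ N₁, ∃ m' ∈ N₁,
      g (x ^ s • m) - u ^ s • (x ^ s • m) = x ^ (s + 1) • m')
    (hχ₂ : ∀ s : ℕ, 1 ≤ s → ∀ m ∈ N₂, ∃ m' ∈ N₂,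
      g (x ^ s • m) - u ^ s • (x ^ s • m) = x ^ (s + 1) • m')
    (htriv₁ : ∀ m ∈ N₁, ∃ m' ∈ N₁, g m - m = x • m')
    (htriv₂ : ∀ m ∈ N₂, ∃ m' ∈ N₂, g m - m = x • m')
    (r : ℕ) (hr : 1 ≤ r)
    (h1 : ∀ m ∈ N₁, x ^ r • m ∈ N₂) :
    (∀ m ∈ N₁, x ^ (r - 1) • m ∈ N₂) ∧ (∀ m ∈ N₁, m ∈ N₂) ∧
      (∀ s : ℕ, 1 ≤ s → (∀ m ∈ N₂, x ^ s • m ∈ N₁) → N₁ = N₂) := by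
  have hx : IsSMulRegular M x := .of_right_eq_zero_of_smul hxreg
  have h12 : N₁ ≤ N₂ := le_of_smul_pow_mem hx hu hχ₁ htriv₂ r h1
  refine ⟨?_, h12, fun s _ h2 => le_antisymm h12 (le_of_smul_pow_mem hx hu hχ₂ htriv₁ s h2)⟩
  obtain ⟨t, rfl⟩ : ∃ t, r = t + 1 := ⟨r - 1, by omega⟩
  simpa using smul_pow_mem_of_smul_pow_succ_mem hx (hu _ hr) t (hχ₁ _ hr) htriv₂ h1
end
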